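/- arXiv:1510.03737 — 4 statements merged into one kernel-verified Lean document; each statement's English description precedes it below -/
import Mathlib

section
/- For any nonzero p, q ∈ ℂ^{n+1}, arccos(|p·q̄|/(|p|·|q|)) = arcsin(| p/|p| − ((p·q̄)/(|p|·|q|²))·q |). In particular the two standard expressions for the Fubini–Study distance between the projective points [p] and [q] agree. -/
/-!
The vector inside the arcsin is `p/|p|` minus its orthogonal projection onto `ℂ q`, so by
Pythagoras its squared length is `1 - c²` with `c = |p·q̄|/(|p||q|)`; and `arccos c = arcsin √(1 - c²)`
for `c ≥ 0`.
-/

noncomputable section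

/-- Hermitian product `w·z̄ = Σᵢ wⁱ·conj(zⁱ)` on `ℂ^m`. -/
def herm {m : ℕ} (w z : EuclideanSpace ℂ (Fin m)) : ℂ :=
  ∑ i, w i * (starRingEnd ℂ) (z i)

/-- Fubini–Study distance between (the projective classes of) `p` and `q`. -/
def fsDist {m : ℕ} (p q : EuclideanSpace ℂ (Fin m)) : ℝ :=
  Real.arccos (‖herm p q‖ / (‖p‖ * ‖q‖))

/-- Initial velocity `γ₀'(p,q)` of the geodesic from `[p]` to `[q]`. -/
def gammaDir {m : ℕ} (p q : EuclideanSpace ℂ (Fin m)) : EuclideanSpace ℂ (Fin m) :=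
  (Real.cot (fsDist p q) : ℂ) • (((‖p‖ : ℂ) / herm q p) • q - (‖p‖ : ℂ)⁻¹ • p)

/-- The geodesic `γ_t(p,q) = cos t·(p/|p|) + sin t·γ₀'(p,q)`. -/
def geo {m : ℕ} (t : ℝ) (p q : EuclideanSpace ℂ (Fin m)) : EuclideanSpace ℂ (Fin m) :=
  (Real.cos t : ℂ) • ((‖p‖ : ℂ)⁻¹ • p) + (Real.sin t : ℂ) • gammaDir p q

/-- The velocity `γ_t'(p,q) = −sin t·(p/|p|) + cos t·γ₀'(p,q)`. -/
def geoVel {m : ℕ} (t : ℝ) (p q : EuclideanSpace ℂ (Fin m)) : EuclideanSpace ℂ (Fin m) :=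
  (-(Real.sin t) : ℂ) • ((‖p‖ : ℂ)⁻¹ • p) + (Real.cos t : ℂ) • gammaDir p q

theorem herm_eq_inner {m : ℕ} (w z : EuclideanSpace ℂ (Fin m)) :
    herm w z = inner ℂ z w := by
  simp [herm, PiLp.inner_apply]

section

open RCLike

variable {𝕜 E : Type*} [RCLike 𝕜] [NormedAddCommGroup E] [InnerProductSpace 𝕜 E]
local notation "⟪" x ", " y "⟫" => inner 𝕜 x y

theorem norm_sub_smul_inner_div_sq (x y : E) :
    ‖x - (⟪y, x⟫ / (‖y‖ : 𝕜) ^ 2) • y‖ ^ 2 = ‖x‖ ^ 2 - ‖⟪y, x⟫‖ ^ 2 / ‖y‖ ^ 2 := by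
  rcases eq_or_ne y 0 with rfl | hy
  · simp
  have hy' : ‖y‖ ≠ 0 := norm_ne_zero_iff.mpr hy
  have cross : re ⟪x, (⟪y, x⟫ / (‖y‖ : 𝕜) ^ 2) • y⟫ = ‖⟪y, x⟫‖ ^ 2 / ‖y‖ ^ 2 := by
    rw [inner_smul_right, ← inner_conj_symm x y, div_mul_eq_mul_div, mul_conj, ← ofReal_pow,
      ← ofReal_pow, ← ofReal_div, ofReal_re]
  rw [@norm_sub_sq 𝕜, cross, norm_smul, mul_pow, norm_div, norm_pow, norm_ofReal, abs_norm]
  field_simp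
  ring

theorem norm_normalize_sub_sq (x y : E) (hx : x ≠ 0) :
    ‖(‖x‖ : 𝕜)⁻¹ • x - (⟪y, x⟫ / ((‖x‖ : 𝕜) * (‖y‖ : 𝕜) ^ 2)) • y‖ ^ 2
      = 1 - (‖⟪y, x⟫‖ / (‖x‖ * ‖y‖)) ^ 2 := by
  have hx' : ‖x‖ ≠ 0 := norm_ne_zero_iff.mpr hx
  have : (‖x‖ : 𝕜)⁻¹ • x - (⟪y, x⟫ / ((‖x‖ : 𝕜) * (‖y‖ : 𝕜) ^ 2)) • y
      = (‖x‖ : 𝕜)⁻¹ • (x - (⟪y, x⟫ / (‖y‖ : 𝕜) ^ 2) • y) := by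
    rw [smul_sub, smul_smul, inv_mul_eq_div, div_div, mul_comm]
  rw [this, norm_smul, mul_pow, norm_sub_smul_inner_div_sq, norm_inv, norm_ofReal, abs_norm]
  field_simp

theorem arccos_eq_arcsin_norm_normalize_sub (x y : E) (hx : x ≠ 0) :
    Real.arccos (‖⟪y, x⟫‖ / (‖x‖ * ‖y‖)) =
      Real.arcsin ‖(‖x‖ : 𝕜)⁻¹ • x - (⟪y, x⟫ / ((‖x‖ : 𝕜) * (‖y‖ : 𝕜) ^ 2)) • y‖ := by
  rw [Real.arccos_eq_arcsin (by positivity), ← norm_normalize_sub_sq x y hx,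
    Real.sqrt_sq (norm_nonneg _)]

end

theorem stmt0_general {n : ℕ} (p q : EuclideanSpace ℂ (Fin (n + 1))) (hp : p ≠ 0) :
    Real.arccos (‖herm p q‖ / (‖p‖ * ‖q‖)) =
      Real.arcsin ‖(‖p‖ : ℂ)⁻¹ • p - (herm p q / ((‖p‖ : ℂ) * (‖q‖ : ℂ) ^ 2)) • q‖ := by
  rw [herm_eq_inner]
  exact arccos_eq_arcsin_norm_normalize_sub p q hp

theorem stmt0 {n : ℕ} (p q : EuclideanSpace ℂ (Fin (n + 1))) (hp : p ≠ 0) (hq : q ≠ 0) :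
    Real.arccos (‖herm p q‖ / (‖p‖ * ‖q‖)) =
      Real.arcsin ‖(‖p‖ : ℂ)⁻¹ • p - (herm p q / ((‖p‖ : ℂ) * (‖q‖ : ℂ) ^ 2)) • q‖ :=
  stmt0_general p q hp
end
end

section
/- Let p, q ∈ ℂ^{n+1} be nonzero with 0 < d(p,q) < π/2. Then the initial velocity of the reversed geodesic satisfies γ₀'(q,p) = ((q·p̄)/(|p|·|q|))·(tan(d(p,q))·(p/|p|) − γ₀'(p,q)). -/
/-!
Write `d = d(p,q)`, `h = p·q̄`, so that `q·p̄ = h̄` and `|h| = cos d·|p||q|`. Both sides are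
combinations of `p` and `q`; the `q`-coefficients agree on the nose, and the `p`-coefficients agree
exactly when `h·h̄ = cos² d·|p|²|q|²`, using `tan d + cot d = 1/(sin d cos d)`.
-/

noncomputable section

section FubiniStudy

variable {m : ℕ} (p q : EuclideanSpace ℂ (Fin m))

lemma herm_swap : herm q p = (starRingEnd ℂ) (herm p q) := by
  simp [herm, map_sum, mul_comm]

lemma herm_eq_inner_s3 : herm p q = inner ℂ q p := by
  simp [herm, PiLp.inner_apply]

lemma fsDist_comm : fsDist q p = fsDist p q := by
  rw [fsDist, fsDist, herm_swap, Complex.norm_conj, mul_comm ‖q‖]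

lemma norm_herm_eq_cos_fsDist_mul (hp : p ≠ 0) (hq : q ≠ 0) :
    ‖herm p q‖ = Real.cos (fsDist p q) * (‖p‖ * ‖q‖) := by
  have hpq : 0 < ‖p‖ * ‖q‖ := mul_pos (norm_pos_iff.mpr hp) (norm_pos_iff.mpr hq)
  have cauchySchwarz : ‖herm p q‖ ≤ ‖p‖ * ‖q‖ := by
    rw [herm_eq_inner_s3, mul_comm]
    exact norm_inner_le_norm q p
  rw [fsDist, Real.cos_arccos (by linarith [div_nonneg (norm_nonneg (herm p q)) hpq.le])
    ((div_le_one hpq).mpr cauchySchwarz), div_mul_cancel₀ _ hpq.ne']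

lemma herm_mul_herm_swap (hp : p ≠ 0) (hq : q ≠ 0) :
    herm p q * herm q p = (Real.cos (fsDist p q) : ℂ) ^ 2 * (‖p‖ : ℂ) ^ 2 * (‖q‖ : ℂ) ^ 2 := by
  rw [herm_swap p q, Complex.mul_conj, Complex.normSq_eq_norm_sq,
    norm_herm_eq_cos_fsDist_mul p q hp hq]
  push_cast
  ring

end FubiniStudy

theorem stmt3 {n : ℕ} (p q : EuclideanSpace ℂ (Fin (n + 1))) (hp : p ≠ 0) (hq : q ≠ 0)
    (hd0 : 0 < fsDist p q) (hd2 : fsDist p q < Real.pi / 2) :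
    gammaDir q p = (herm q p / ((‖p‖ : ℂ) * (‖q‖ : ℂ))) •
      ((Real.tan (fsDist p q) : ℂ) • ((‖p‖ : ℂ)⁻¹ • p) - gammaDir p q) := by
  have hcos : (Real.cos (fsDist p q) : ℂ) ≠ 0 :=
    Complex.ofReal_ne_zero.mpr (Real.cos_pos_of_mem_Ioo ⟨by linarith [Real.pi_pos], hd2⟩).ne'
  have hsin : (Real.sin (fsDist p q) : ℂ) ≠ 0 :=
    Complex.ofReal_ne_zero.mpr (Real.sin_pos_of_pos_of_lt_pi hd0 (by linarith [Real.pi_pos])).ne'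
  have hpyth : (Real.sin (fsDist p q) : ℂ) ^ 2 + (Real.cos (fsDist p q) : ℂ) ^ 2 = 1 := by
    exact_mod_cast Real.sin_sq_add_cos_sq (fsDist p q)
  have hP : (‖p‖ : ℂ) ≠ 0 := Complex.ofReal_ne_zero.mpr (norm_ne_zero_iff.mpr hp)
  have hQ : (‖q‖ : ℂ) ≠ 0 := Complex.ofReal_ne_zero.mpr (norm_ne_zero_iff.mpr hq)
  have hprod := herm_mul_herm_swap p q hp hq
  have hprod_ne : herm p q * herm q p ≠ 0 := by
    rw [hprod]
    exact mul_ne_zero (mul_ne_zero (pow_ne_zero 2 hcos) (pow_ne_zero 2 hP)) (pow_ne_zero 2 hQ)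
  rw [gammaDir, gammaDir, fsDist_comm, Real.cot_eq_cos_div_sin, Real.tan_eq_sin_div_cos,
    Complex.ofReal_div, Complex.ofReal_div]
  -- otherwise `match_scalars` rewrites the casts to `Complex.cos`/`Complex.sin`
  generalize (Real.cos (fsDist p q) : ℂ) = c at *
  generalize (Real.sin (fsDist p q) : ℂ) = s at *
  have hherm := left_ne_zero_of_mul hprod_ne
  have hherm' := right_ne_zero_of_mul hprod_ne
  match_scalars
  · field_simp
    linear_combination (-s ^ 2 - c ^ 2) * hprod - c ^ 2 * (‖p‖ : ℂ) ^ 2 * (‖q‖ : ℂ) ^ 2 * hpyth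
  · field_simp
end
end

section
/- Let n ≥ 1 and let Ω = { z̃ ∈ ℂⁿ : |z̃| < 1 and (Re z̃ⁿ < 0 or Im z̃ⁿ < 0) }. Then for every z̃ ∈ ℂⁿ with |z̃| < √2 − 1, Re z̃ⁿ < 0 and Im z̃ⁿ < 0, the distance from z̃ to the topological frontier of Ω satisfies inf_{w̃ ∈ frontier Ω} d_c(z̃, w̃) = arcsin( |z̃ⁿ| / √(|z̃|² + 1) ), and the infimum is attained at w̃ = (z̃¹,…,z̃ⁿ⁻¹, 0). -/
noncomputable section

/-- The Fubini–Study distance between affine-chart points `[z̃ : 1]`, `[w̃ : 1]`. -/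
def chartDist {m : ℕ} (z w : EuclideanSpace ℂ (Fin m)) : ℝ :=
  Real.arccos (‖herm z w + 1‖ /
    (Real.sqrt (‖z‖ ^ 2 + 1) * Real.sqrt (‖w‖ ^ 2 + 1)))

/-! Write `z'` for `z` with its last coordinate erased. At `w₀ = z'` one has `z·w̄₀ = ‖z'‖²`, so
`cos d_c(z, w₀) = √(‖z'‖² + 1) / √(‖z‖² + 1)`, which is the cosine of the claimed arcsine. For the
lower bound it suffices that `|z·w̄ + 1|² ≤ (‖z'‖² + 1)(‖w‖² + 1)` for every `w` outside the open
set `Ω`, since frontier points lie outside it. Either `‖w‖ ≥ 1`, and then `‖z‖ < √2 - 1` gives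
`|z·w̄ + 1| ≤ ‖z‖‖w‖ + 1 ≤ √(‖w‖² + 1)`; or the last coordinate of `w` lies in the closed first
quadrant, so `d = zⁿ·conj wⁿ` has `Re d ≤ 0`, hence `|1 + d|² ≤ 1 + |wⁿ|²`, and Cauchy–Schwarz
applied to `z'·w̄' + (1 + d)` concludes. -/

open Real Topology

namespace ChartDist

variable {m : ℕ}

lemma herm_eq_inner (x y : EuclideanSpace ℂ (Fin m)) : herm x y = inner ℂ y x := by
  simp only [herm, PiLp.inner_apply, RCLike.inner_apply]

lemma herm_self (x : EuclideanSpace ℂ (Fin m)) : herm x x = ((‖x‖ ^ 2 : ℝ) : ℂ) := by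
  rw [herm_eq_inner, inner_self_eq_norm_sq_to_K]
  push_cast
  rfl

lemma norm_herm_le (x y : EuclideanSpace ℂ (Fin m)) : ‖herm x y‖ ≤ ‖x‖ * ‖y‖ := by
  rw [herm_eq_inner, mul_comm]
  exact norm_inner_le_norm y x

def eraseCoord (i : Fin m) (x : EuclideanSpace ℂ (Fin m)) : EuclideanSpace ℂ (Fin m) :=
  WithLp.toLp 2 (Function.update x i 0)

variable (i : Fin m)

@[simp]
lemma eraseCoord_apply_self (x : EuclideanSpace ℂ (Fin m)) : eraseCoord i x i = 0 :=
  Function.update_self i 0 x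

lemma eraseCoord_add_single (x : EuclideanSpace ℂ (Fin m)) :
    eraseCoord i x + EuclideanSpace.single i (x i) = x := by
  ext j
  by_cases hj : j = i
  · subst hj; simp
  · simp [eraseCoord, hj]

lemma eraseCoord_eraseCoord (x : EuclideanSpace ℂ (Fin m)) :
    eraseCoord i (eraseCoord i x) = eraseCoord i x := by
  simp [eraseCoord]

lemma inner_eraseCoord_single (x : EuclideanSpace ℂ (Fin m)) (c : ℂ) :
    inner ℂ (eraseCoord i x) (EuclideanSpace.single i c) = 0 := by
  simp [EuclideanSpace.inner_single_right]

lemma norm_sq_eraseCoord (x : EuclideanSpace ℂ (Fin m)) :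
    ‖eraseCoord i x‖ ^ 2 = ‖x‖ ^ 2 - ‖x i‖ ^ 2 := by
  have h := norm_add_sq_eq_norm_sq_add_norm_sq_of_inner_eq_zero _ _
    (inner_eraseCoord_single i x (x i))
  rw [eraseCoord_add_single, PiLp.norm_single] at h
  linear_combination -h

lemma herm_eq_herm_eraseCoord_add (z w : EuclideanSpace ℂ (Fin m)) :
    herm z w = herm (eraseCoord i z) (eraseCoord i w) + z i * (starRingEnd ℂ) (w i) := by
  simp only [herm_eq_inner]
  conv_lhs => rw [← eraseCoord_add_single i z, ← eraseCoord_add_single i w]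
  simp [EuclideanSpace.inner_single_right, EuclideanSpace.inner_single_left, mul_comm]

lemma herm_eraseCoord_right (z : EuclideanSpace ℂ (Fin m)) :
    herm z (eraseCoord i z) = ((‖eraseCoord i z‖ ^ 2 : ℝ) : ℂ) := by
  rw [herm_eq_herm_eraseCoord_add i, eraseCoord_eraseCoord, herm_self]
  simp

lemma norm_eraseCoord_le (x : EuclideanSpace ℂ (Fin m)) : ‖eraseCoord i x‖ ≤ ‖x‖ :=
  (pow_le_pow_iff_left₀ (norm_nonneg _) (norm_nonneg _) two_ne_zero).1 <| by
    rw [norm_sq_eraseCoord]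
    linarith [sq_nonneg ‖x i‖]

lemma norm_apply_le (x : EuclideanSpace ℂ (Fin m)) : ‖x i‖ ≤ ‖x‖ :=
  (pow_le_pow_iff_left₀ (norm_nonneg _) (norm_nonneg _) two_ne_zero).1 <| by
    linarith [norm_sq_eraseCoord i x, sq_nonneg ‖eraseCoord i x‖]

lemma arccos_div_le_chartDist {z w : EuclideanSpace ℂ (Fin m)} {r : ℝ}
    (h : ‖herm z w + 1‖ ≤ r * √(‖w‖ ^ 2 + 1)) :
    arccos (r / √(‖z‖ ^ 2 + 1)) ≤ chartDist z w := by
  unfold chartDist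
  apply arccos_le_arccos
  rw [mul_comm (√(‖z‖ ^ 2 + 1)), ← div_div]
  exact div_le_div_of_nonneg_right ((div_le_iff₀ (by positivity)).2 h) (sqrt_nonneg _)

lemma chartDist_eraseCoord (z : EuclideanSpace ℂ (Fin m)) :
    chartDist z (eraseCoord i z) = arccos (√(‖eraseCoord i z‖ ^ 2 + 1) / √(‖z‖ ^ 2 + 1)) := by
  have hpos : 0 < ‖eraseCoord i z‖ ^ 2 + 1 := by positivity
  unfold chartDist
  rw [herm_eraseCoord_right, ← Complex.ofReal_one, ← Complex.ofReal_add, Complex.norm_real,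
    Real.norm_of_nonneg hpos.le, mul_comm, ← div_div, div_sqrt]

lemma arcsin_eq_arccos_eraseCoord (z : EuclideanSpace ℂ (Fin m)) :
    arcsin (‖z i‖ / √(‖z‖ ^ 2 + 1)) =
      arccos (√(‖eraseCoord i z‖ ^ 2 + 1) / √(‖z‖ ^ 2 + 1)) := by
  have hpos : 0 < ‖z‖ ^ 2 + 1 := by positivity
  rw [arcsin_eq_arccos (by positivity), div_pow, sq_sqrt hpos.le, norm_sq_eraseCoord,
    ← sqrt_div' _ hpos.le]
  congr 2
  field_simp
  ring

lemma norm_herm_add_one_le_of_one_le_norm {z w : EuclideanSpace ℂ (Fin m)}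
    (hz : ‖z‖ < √2 - 1) (hw : 1 ≤ ‖w‖) : ‖herm z w + 1‖ ≤ √(‖w‖ ^ 2 + 1) := by
  have hz2 : ‖z‖ ^ 2 + 2 * ‖z‖ ≤ 1 := by
    nlinarith [sq_sqrt (show (0 : ℝ) ≤ 2 by norm_num), norm_nonneg z]
  have hnorm : ‖herm z w + 1‖ ≤ ‖z‖ * ‖w‖ + 1 :=
    (norm_add_le _ _).trans (by simpa using norm_herm_le z w)
  apply le_sqrt_of_sq_le
  calc ‖herm z w + 1‖ ^ 2 ≤ (‖z‖ * ‖w‖ + 1) ^ 2 := by gcongr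
    _ ≤ ‖w‖ ^ 2 + 1 := by
      nlinarith [norm_nonneg z, mul_nonneg (norm_nonneg z) (mul_nonneg (norm_nonneg w)
        (sub_nonneg.2 hw))]

lemma norm_one_add_sq_le_of_re_nonpos {d : ℂ} (hd : d.re ≤ 0) : ‖1 + d‖ ^ 2 ≤ 1 + ‖d‖ ^ 2 := by
  rw [Complex.sq_norm, Complex.sq_norm, Complex.normSq_apply, Complex.normSq_apply]
  simp only [Complex.add_re, Complex.add_im, Complex.one_re, Complex.one_im]
  nlinarith

lemma norm_herm_add_one_le_of_re_nonpos {z w : EuclideanSpace ℂ (Fin m)} (hzi : ‖z i‖ ≤ 1)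
    (hre : (z i * (starRingEnd ℂ) (w i)).re ≤ 0) :
    ‖herm z w + 1‖ ≤ √(‖eraseCoord i z‖ ^ 2 + 1) * √(‖w‖ ^ 2 + 1) := by
  set d := z i * (starRingEnd ℂ) (w i)
  set s := ‖eraseCoord i z‖
  set u := ‖eraseCoord i w‖
  have hd : ‖1 + d‖ ^ 2 ≤ 1 + ‖w i‖ ^ 2 := by
    have : ‖d‖ ≤ ‖w i‖ := by
      rw [norm_mul, Complex.norm_conj]
      exact mul_le_of_le_one_left (norm_nonneg _) hzi
    nlinarith [norm_one_add_sq_le_of_re_nonpos hre, norm_nonneg d]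
  have hnorm : ‖herm z w + 1‖ ≤ s * u + ‖1 + d‖ := by
    rw [herm_eq_herm_eraseCoord_add i z w, add_assoc, add_comm d]
    exact (norm_add_le _ _).trans (by gcongr; exact norm_herm_le _ _)
  rw [← sqrt_mul (by positivity)]
  apply le_sqrt_of_sq_le
  calc ‖herm z w + 1‖ ^ 2 ≤ (s * u + ‖1 + d‖) ^ 2 := by gcongr
    _ ≤ (s ^ 2 + 1) * (u ^ 2 + ‖1 + d‖ ^ 2) := by nlinarith [sq_nonneg (s * ‖1 + d‖ - u)]
    _ ≤ (s ^ 2 + 1) * (‖w‖ ^ 2 + 1) := by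
      refine mul_le_mul_of_nonneg_left ?_ (by positivity)
      linarith [norm_sq_eraseCoord i w]

lemma re_mul_conj_nonpos {a b : ℂ} (hre : a.re < 0) (him : a.im < 0) (hb_re : 0 ≤ b.re)
    (hb_im : 0 ≤ b.im) : (a * (starRingEnd ℂ) b).re ≤ 0 := by
  simp only [Complex.mul_re, Complex.conj_re, Complex.conj_im]
  nlinarith

def quadrantCutBall (i : Fin m) : Set (EuclideanSpace ℂ (Fin m)) :=
  {z | ‖z‖ < 1 ∧ ((z i).re < 0 ∨ (z i).im < 0)}

lemma isOpen_quadrantCutBall : IsOpen (quadrantCutBall i) := by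
  have hc : Continuous fun z : EuclideanSpace ℂ (Fin m) => z i := (EuclideanSpace.proj i).continuous
  exact (isOpen_lt continuous_norm continuous_const).inter
    ((isOpen_lt (Complex.continuous_re.comp hc) continuous_const).union
      (isOpen_lt (Complex.continuous_im.comp hc) continuous_const))

lemma eraseCoord_mem_frontier {z : EuclideanSpace ℂ (Fin m)} (hz : ‖z‖ < 1) :
    eraseCoord i z ∈ frontier (quadrantCutBall i) := by
  rw [(isOpen_quadrantCutBall i).frontier_eq]
  refine ⟨?_, fun h => by simp [quadrantCutBall] at h⟩
  set f : ℝ → EuclideanSpace ℂ (Fin m) :=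
    fun t => eraseCoord i z - (t : ℂ) • EuclideanSpace.single i 1
  have hf : Filter.Tendsto f (𝓝[>] 0) (𝓝 (eraseCoord i z)) := by
    have : Continuous f := by fun_prop
    simpa [f] using (this.continuousWithinAt (s := Set.Ioi 0) (x := 0)).tendsto
  have hball : ∀ᶠ t in 𝓝[>] 0, ‖f t‖ < 1 :=
    hf.norm.eventually (gt_mem_nhds ((norm_eraseCoord_le i z).trans_lt hz))
  apply mem_closure_of_tendsto hf
  filter_upwards [hball, self_mem_nhdsWithin] with t ht (htpos : 0 < t)
  exact ⟨ht, Or.inl (by simpa [f] using htpos)⟩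

lemma norm_herm_add_one_le_of_notMem {z w : EuclideanSpace ℂ (Fin m)} (hz : ‖z‖ < √2 - 1)
    (hre : (z i).re < 0) (him : (z i).im < 0) (hw : w ∉ quadrantCutBall i) :
    ‖herm z w + 1‖ ≤ √(‖eraseCoord i z‖ ^ 2 + 1) * √(‖w‖ ^ 2 + 1) := by
  simp only [quadrantCutBall, Set.mem_ofPred_eq, not_and_or, not_lt, not_or] at hw
  rcases hw with hw | ⟨hw_re, hw_im⟩
  · calc ‖herm z w + 1‖ ≤ √(‖w‖ ^ 2 + 1) := norm_herm_add_one_le_of_one_le_norm hz hw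
      _ ≤ _ := le_mul_of_one_le_left (sqrt_nonneg _)
        (one_le_sqrt.2 (le_add_of_nonneg_left (sq_nonneg _)))
  · have hz1 : ‖z‖ ≤ 1 := by linarith [sqrt_two_lt_three_halves]
    exact norm_herm_add_one_le_of_re_nonpos i ((norm_apply_le i z).trans hz1)
      (re_mul_conj_nonpos hre him hw_re hw_im)

end ChartDist

open ChartDist in
theorem stmt18 {n : ℕ}
    (Om : Set (EuclideanSpace ℂ (Fin (n + 1))))
    (hOm : Om = {z : EuclideanSpace ℂ (Fin (n + 1)) |
      ‖z‖ < 1 ∧ ((z (Fin.last n)).re < 0 ∨ (z (Fin.last n)).im < 0)})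
    (z : EuclideanSpace ℂ (Fin (n + 1)))
    (hz : ‖z‖ < Real.sqrt 2 - 1)
    (hre : (z (Fin.last n)).re < 0) (him : (z (Fin.last n)).im < 0) :
    (⨅ w : frontier Om, chartDist z (w : EuclideanSpace ℂ (Fin (n + 1)))) =
      Real.arcsin (‖z (Fin.last n)‖ / Real.sqrt (‖z‖ ^ 2 + 1)) ∧
    WithLp.toLp 2 (Function.update z (Fin.last n) 0) ∈ frontier Om ∧
    chartDist z (WithLp.toLp 2 (Function.update z (Fin.last n) 0)) =
      Real.arcsin (‖z (Fin.last n)‖ / Real.sqrt (‖z‖ ^ 2 + 1)) := by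
  subst hOm
  set i := Fin.last n
  have hmem : eraseCoord i z ∈ frontier (quadrantCutBall i) :=
    eraseCoord_mem_frontier i (hz.trans (by linarith [sqrt_two_lt_three_halves]))
  have hval : chartDist z (eraseCoord i z) = arcsin (‖z i‖ / √(‖z‖ ^ 2 + 1)) := by
    rw [chartDist_eraseCoord, arcsin_eq_arccos_eraseCoord]
  have hlow (w : EuclideanSpace ℂ (Fin (n + 1))) (hw : w ∈ frontier (quadrantCutBall i)) :
      arcsin (‖z i‖ / √(‖z‖ ^ 2 + 1)) ≤ chartDist z w := by
    rw [(isOpen_quadrantCutBall i).frontier_eq] at hw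
    rw [arcsin_eq_arccos_eraseCoord]
    exact arccos_div_le_chartDist (norm_herm_add_one_le_of_notMem i hz hre him hw.2)
  have : Nonempty (frontier (quadrantCutBall i)) := ⟨⟨_, hmem⟩⟩
  have hleast : IsLeast (Set.range fun w : frontier (quadrantCutBall i) => chartDist z w)
      (arcsin (‖z i‖ / √(‖z‖ ^ 2 + 1))) :=
    ⟨⟨⟨_, hmem⟩, hval⟩, Set.forall_mem_range.2 fun w => hlow w w.2⟩
  exact ⟨hleast.isGLB.ciInf_eq, hmem, hval⟩
end
end

section
/- Fix η with 0 < η < 1 and define u : ℝ² → ℝ by u(x,y) = −(arctan(√(x² + y²)))^η. Then there exists ε > 0 such that for every (x,y) ∈ ℝ² with 0 < √(x² + y²) < ε, u is twice differentiable near (x,y) and (∂²u/∂x²)(x,y) + (∂²u/∂y²)(x,y) < 0. -/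
/-!
The function is radial, `u = f (√(x ^ 2 + y ^ 2))` with `f r = -(arctan r) ^ η`, so its Laplacian
is `f'' r + f' r / r`. Writing `A = arctan r`, this equals
`-(η * A ^ (η - 2) / (r * (1 + r ^ 2) ^ 2)) * ((η - 1) * r + A * (1 - r ^ 2))`.
The bound `A ≥ r / (1 + r ^ 2)` makes the last factor at least
`r * (η * (1 + r ^ 2) - 2 * r ^ 2) / (1 + r ^ 2)`, which is positive once `r < 1` and `2 * r ^ 2 < η`.
-/

open Real Filter Topology

/-- With `θ = arctan r`, `r / (1 + r ^ 2) = sin θ * cos θ = sin (2 * θ) / 2 ≤ θ`. -/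
theorem Real.div_one_add_sq_le_arctan {r : ℝ} (hr : 0 ≤ r) : r / (1 + r ^ 2) ≤ arctan r := by
  have hsin : sin (2 * arctan r) = 2 * (r / (1 + r ^ 2)) := by
    have h : √(1 + r ^ 2) ^ 2 = 1 + r ^ 2 := sq_sqrt (by positivity)
    rw [sin_two_mul, sin_arctan, cos_arctan]
    field_simp
    rw [h]
  linarith [sin_le (by positivity : 0 ≤ 2 * arctan r), arctan_nonneg.mpr hr]

theorem deriv_deriv_comp_sq_add {g g' : ℝ → ℝ} {g'' x c : ℝ}
    (hg : ∀ᶠ t in 𝓝 (x ^ 2 + c), HasDerivAt g (g' t) t) (hg' : HasDerivAt g' g'' (x ^ 2 + c)) :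
    deriv (fun a => deriv (fun a' => g (a' ^ 2 + c)) a) x =
      2 * g' (x ^ 2 + c) + 4 * x ^ 2 * g'' := by
  have hsq (a : ℝ) : HasDerivAt (fun a' : ℝ => a' ^ 2 + c) (2 * a) a := by
    simpa using (hasDerivAt_pow 2 a).add_const c
  have hfirst : (fun a => deriv (fun a' => g (a' ^ 2 + c)) a) =ᶠ[𝓝 x]
      fun a => g' (a ^ 2 + c) * (2 * a) := by
    filter_upwards [(hsq x).continuousAt.eventually hg] with a ha
    exact (ha.comp a (hsq a)).deriv
  have hsecond : HasDerivAt (fun a => g' (a ^ 2 + c) * (2 * a))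
      (g'' * (2 * x) * (2 * x) + g' (x ^ 2 + c) * 2) x :=
    (hg'.comp x (hsq x)).mul (by simpa using (hasDerivAt_id x).const_mul 2)
  rw [hfirst.deriv_eq, hsecond.deriv]
  ring

theorem laplacian_comp_sq_add_sq {g g' : ℝ → ℝ} {g'' x y : ℝ}
    (hg : ∀ᶠ t in 𝓝 (x ^ 2 + y ^ 2), HasDerivAt g (g' t) t)
    (hg' : HasDerivAt g' g'' (x ^ 2 + y ^ 2)) :
    deriv (fun a => deriv (fun a' => g (a' ^ 2 + y ^ 2)) a) x +
      deriv (fun b => deriv (fun b' => g (x ^ 2 + b' ^ 2)) b) y =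
    4 * g' (x ^ 2 + y ^ 2) + 4 * (x ^ 2 + y ^ 2) * g'' := by
  rw [deriv_deriv_comp_sq_add hg hg']
  rw [add_comm (x ^ 2) (y ^ 2)] at hg hg'
  simp_rw [add_comm (x ^ 2) (_ ^ 2)]
  rw [deriv_deriv_comp_sq_add hg hg']
  ring

theorem laplacian_comp_sqrt_sq_add_sq {f f' : ℝ → ℝ} {f'' x y : ℝ} (hs : 0 < x ^ 2 + y ^ 2)
    (hf : ∀ᶠ r in 𝓝 √(x ^ 2 + y ^ 2), HasDerivAt f (f' r) r)
    (hf' : HasDerivAt f' f'' √(x ^ 2 + y ^ 2)) :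
    deriv (fun a => deriv (fun a' => f √(a' ^ 2 + y ^ 2)) a) x +
      deriv (fun b => deriv (fun b' => f √(x ^ 2 + b' ^ 2)) b) y =
    f'' + f' √(x ^ 2 + y ^ 2) / √(x ^ 2 + y ^ 2) := by
  have hr : √(x ^ 2 + y ^ 2) ≠ 0 := (sqrt_pos.mpr hs).ne'
  have hrs : √(x ^ 2 + y ^ 2) ^ 2 = x ^ 2 + y ^ 2 := sq_sqrt hs.le
  have hg : ∀ᶠ t in 𝓝 (x ^ 2 + y ^ 2), HasDerivAt (fun t => f √t) (f' √t / (2 * √t)) t := by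
    filter_upwards [eventually_gt_nhds hs, continuous_sqrt.continuousAt.eventually hf]
      with t ht hft
    exact (hft.comp t (hasDerivAt_sqrt ht.ne')).congr_deriv (mul_one_div _ _)
  have hg' : HasDerivAt (fun t => f' √t / (2 * √t))
      (f'' / (4 * (x ^ 2 + y ^ 2)) - f' √(x ^ 2 + y ^ 2) / (4 * (x ^ 2 + y ^ 2) * √(x ^ 2 + y ^ 2)))
      (x ^ 2 + y ^ 2) := by
    have hsqrt := hasDerivAt_sqrt hs.ne'
    refine ((hf'.comp _ hsqrt).div (hsqrt.const_mul 2) (by positivity)).congr_deriv ?_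
    simp only [Function.comp_apply]
    field_simp
    rw [hrs]
    ring
  rw [laplacian_comp_sq_add_sq hg hg']
  field_simp
  ring

theorem hasDerivAt_neg_arctan_rpow (η : ℝ) {r : ℝ} (hr : 0 < r) :
    HasDerivAt (fun r => -(arctan r ^ η)) (-(η * arctan r ^ (η - 1) / (1 + r ^ 2))) r := by
  refine ((hasDerivAt_arctan r).rpow_const (Or.inl (arctan_pos.mpr hr).ne')).neg.congr_deriv ?_
  field_simp

theorem hasDerivAt_deriv_neg_arctan_rpow (η : ℝ) {r : ℝ} (hr : 0 < r) :
    HasDerivAt (fun r => -(η * arctan r ^ (η - 1) / (1 + r ^ 2)))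
      (-(η * ((η - 1) * arctan r ^ (η - 2) - 2 * r * arctan r ^ (η - 1)) / (1 + r ^ 2) ^ 2)) r := by
  have hnum := ((hasDerivAt_arctan r).rpow_const (p := η - 1)
    (Or.inl (arctan_pos.mpr hr).ne')).const_mul η
  have hden : HasDerivAt (fun r : ℝ => 1 + r ^ 2) (2 * r) r := by
    simpa using (hasDerivAt_pow 2 r).const_add 1
  refine (hnum.div hden (by positivity)).neg.congr_deriv ?_
  rw [show η - 1 - 1 = η - 2 by ring]
  field_simp

theorem radial_laplacian_neg_arctan_rpow_neg {η r : ℝ} (hη : 0 < η) (hr0 : 0 < r) (hr1 : r < 1)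
    (hrη : 2 * r ^ 2 < η) :
    -(η * ((η - 1) * arctan r ^ (η - 2) - 2 * r * arctan r ^ (η - 1)) / (1 + r ^ 2) ^ 2) +
      -(η * arctan r ^ (η - 1) / (1 + r ^ 2)) / r < 0 := by
  have hA : 0 < arctan r := arctan_pos.mpr hr0
  have hAη : arctan r ^ (η - 1) = arctan r ^ (η - 2) * arctan r := by
    rw [← rpow_add_one hA.ne']; ring_nf
  have hfactor : -(η * ((η - 1) * arctan r ^ (η - 2) - 2 * r * arctan r ^ (η - 1)) / (1 + r ^ 2) ^ 2) +
      -(η * arctan r ^ (η - 1) / (1 + r ^ 2)) / r =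
      -(η * arctan r ^ (η - 2) / (r * (1 + r ^ 2) ^ 2)) * ((η - 1) * r + arctan r * (1 - r ^ 2)) := by
    rw [hAη]; field_simp; ring
  have hbound := div_one_add_sq_le_arctan hr0.le
  rw [div_le_iff₀ (by positivity)] at hbound
  have hbracket : 0 < (η - 1) * r + arctan r * (1 - r ^ 2) := by
    have h := mul_le_mul_of_nonneg_right hbound (by nlinarith : (0:ℝ) ≤ 1 - r ^ 2)
    have h' : 0 < ((η - 1) * r + arctan r * (1 - r ^ 2)) * (1 + r ^ 2) := by
      nlinarith [mul_pos hr0 (sub_pos.2 hrη), mul_nonneg (mul_nonneg hr0.le hη.le) (sq_nonneg r)]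
    exact (mul_pos_iff_of_pos_right (by positivity)).1 h'
  rw [hfactor]
  exact mul_neg_of_neg_of_pos (neg_neg_of_pos (by positivity)) hbracket

theorem contDiffAt_neg_arctan_sqrt_rpow {η x y : ℝ} {n : WithTop ℕ∞} (hs : 0 < x ^ 2 + y ^ 2) :
    ContDiffAt ℝ n (fun p : ℝ × ℝ => -(arctan √(p.1 ^ 2 + p.2 ^ 2) ^ η)) (x, y) := by
  have hsum : ContDiffAt ℝ n (fun p : ℝ × ℝ => p.1 ^ 2 + p.2 ^ 2) (x, y) :=
    (contDiffAt_fst.pow 2).add (contDiffAt_snd.pow 2)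
  exact ((contDiff_arctan.contDiffAt.comp _ (hsum.sqrt hs.ne')).rpow_const_of_ne (arctan_pos.mpr (sqrt_pos.mpr hs)).ne').neg

theorem stmt19_general (η : ℝ) (hη0 : 0 < η) :
    ∃ ε > 0, ∀ x y : ℝ,
      0 < Real.sqrt (x ^ 2 + y ^ 2) → Real.sqrt (x ^ 2 + y ^ 2) < ε →
      ContDiffAt ℝ 2
        (fun pt : ℝ × ℝ => -(Real.arctan (Real.sqrt (pt.1 ^ 2 + pt.2 ^ 2)) ^ η)) (x, y) ∧
      deriv (fun a : ℝ =>
          deriv (fun a' : ℝ => -(Real.arctan (Real.sqrt (a' ^ 2 + y ^ 2)) ^ η)) a) x +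
        deriv (fun b : ℝ =>
          deriv (fun b' : ℝ => -(Real.arctan (Real.sqrt (x ^ 2 + b' ^ 2)) ^ η)) b) y < 0 := by
  refine ⟨min 1 √(η / 2), by positivity, fun x y hr hε => ⟨?_, ?_⟩⟩
  · exact contDiffAt_neg_arctan_sqrt_rpow (sqrt_pos.mp hr)
  · have hf : ∀ᶠ r in 𝓝 √(x ^ 2 + y ^ 2), HasDerivAt (fun r => -(arctan r ^ η))
        (-(η * arctan r ^ (η - 1) / (1 + r ^ 2))) r := by
      filter_upwards [eventually_gt_nhds hr] with r hr using hasDerivAt_neg_arctan_rpow η hr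
    rw [laplacian_comp_sqrt_sq_add_sq (sqrt_pos.mp hr) hf (hasDerivAt_deriv_neg_arctan_rpow η hr)]
    have hrη : √(x ^ 2 + y ^ 2) < √(η / 2) := hε.trans_le (min_le_right _ _)
    rw [lt_sqrt hr.le] at hrη
    exact radial_laplacian_neg_arctan_rpow_neg hη0 hr (hε.trans_le (min_le_left _ _)) (by linarith)

theorem stmt19 (η : ℝ) (hη0 : 0 < η) (hη1 : η < 1) :
    ∃ ε > 0, ∀ x y : ℝ,
      0 < Real.sqrt (x ^ 2 + y ^ 2) → Real.sqrt (x ^ 2 + y ^ 2) < ε →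
      ContDiffAt ℝ 2
        (fun pt : ℝ × ℝ => -(Real.arctan (Real.sqrt (pt.1 ^ 2 + pt.2 ^ 2)) ^ η)) (x, y) ∧
      deriv (fun a : ℝ =>
          deriv (fun a' : ℝ => -(Real.arctan (Real.sqrt (a' ^ 2 + y ^ 2)) ^ η)) a) x +
        deriv (fun b : ℝ =>
          deriv (fun b' : ℝ => -(Real.arctan (Real.sqrt (x ^ 2 + b' ^ 2)) ^ η)) b) y < 0 :=
  stmt19_general η hη0
end
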